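/- Let n ≥ 2 be an integer and let x ∈ ℝ^n_+. Then the sharp constant for the normal derivative coincides with that for the gradient in the case p = ∞: sup { |∂u_f/∂x_n (x)| / ‖f‖_{L^∞(ℝ^{n−1})} : f ∈ L^∞(ℝ^{n−1}), f ≠ 0 } = 4(n−1)^{(n−1)/2} ω_{n−1} / (n^{n/2} ω_n x_n). -/

import Mathlib

open MeasureTheory Real Metric
open scoped RealInnerProductSpace ENNReal

noncomputable section

/-- Area `ω_n` of the unit sphere `S^{n-1}` in `ℝ^n`. -/
def sphereArea (n : ℕ) : ℝ := 2 * π ^ ((n : ℝ) / 2) / Real.Gamma ((n : ℝ) / 2)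

/-- Embedding of `ℝ^{n-1}` into the boundary hyperplane of `ℝ^n`. -/
def embed (n : ℕ) (y : EuclideanSpace ℝ (Fin (n - 1))) : EuclideanSpace ℝ (Fin n) :=
  (EuclideanSpace.equiv (Fin n) ℝ).symm fun i => if h : (i : ℕ) < n - 1 then y ⟨i, h⟩ else 0

/-- The Poisson integral of `f : ℝ^{n-1} → ℝ` in the half-space `ℝ^n_+`. -/
def poisson (n : ℕ) (hn : 0 < n) (f : EuclideanSpace ℝ (Fin (n - 1)) → ℝ)
    (x : EuclideanSpace ℝ (Fin n)) : ℝ :=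
  (2 / sphereArea n) * ∫ y, (x ⟨n - 1, by omega⟩ / ‖embed n y - x‖ ^ n) * f y

/-- The unit vector `e_n` in `ℝ^n`. -/
def lastUnit (n : ℕ) (hn : 0 < n) : EuclideanSpace ℝ (Fin n) :=
  EuclideanSpace.single ⟨n - 1, by omega⟩ 1

/-!
Differentiating under the integral sign, `∂u_f/∂x_n (x) = (2/ω_n) ∫ f(y) K(y) dy`, where `K` is
the normal derivative of the Poisson kernel; by `L¹`–`L^∞` duality the supremum is
`(2/ω_n) ‖K‖₁`, attained at `f = sign K`. With `m = n - 1`, `a = x_n` and `s = |y - x'|`,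
`K = (s² + a²)^{-(m+1)/2} - (m+1) a² (s² + a²)^{-(m+3)/2}`, and in polar coordinates
`s^{m-1} K(s) = -G'(s)` for `G(s) = s^m (s² + a²)^{-(m+1)/2}`. Since `G(0) = 0 = G(∞)` and `G`
increases up to `s = a √m` and decreases afterwards, `‖K‖₁ = 2 ω_m G(a √m)
= 2 ω_m m^{m/2} / ((m+1)^{(m+1)/2} a)`.
-/

open Set Filter Topology

section Duality

variable {α : Type*} [MeasurableSpace α] {μ : Measure α}

lemma ae_abs_le_eLpNorm_top_toReal {f : α → ℝ} (hf : MemLp f ⊤ μ) :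
    ∀ᵐ y ∂μ, |f y| ≤ (eLpNorm f ⊤ μ).toReal := by
  filter_upwards [ae_le_eLpNormEssSup (f := f) (μ := μ)] with y hy
  rw [eLpNorm_exponent_top]
  have hne : eLpNormEssSup f μ ≠ ⊤ := by rw [← eLpNorm_exponent_top]; exact hf.eLpNorm_ne_top
  simpa [Real.norm_eq_abs] using ENNReal.toReal_mono hne hy

lemma abs_integral_mul_le_eLpNorm_top_mul {f g : α → ℝ} (hf : MemLp f ⊤ μ)
    (hg : Integrable g μ) :
    |∫ y, f y * g y ∂μ| ≤ (eLpNorm f ⊤ μ).toReal * ∫ y, |g y| ∂μ := by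
  rw [← integral_const_mul]
  refine (abs_integral_le_integral_abs).trans (integral_mono_of_nonneg
    (ae_of_all _ fun y => abs_nonneg _) (hg.abs.const_mul _) ?_)
  filter_upwards [ae_abs_le_eLpNorm_top_toReal hf] with y hy
  rw [abs_mul]
  exact mul_le_mul_of_nonneg_right hy (abs_nonneg _)

/-- The supremum is attained at the sign of `g`. -/
lemma isGreatest_abs_div_eLpNorm_top [NeZero μ] {g : α → ℝ} (hg : Integrable g μ)
    {L : (α → ℝ) → ℝ} (hL : ∀ f, MemLp f ⊤ μ → L f = ∫ y, f y * g y ∂μ) :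
    IsGreatest {r | ∃ f : α → ℝ, MemLp f ⊤ μ ∧ eLpNorm f ⊤ μ ≠ 0 ∧
      r = |L f| / (eLpNorm f ⊤ μ).toReal} (∫ y, |g y| ∂μ) := by
  constructor
  · set s : α → ℝ := fun y => if g y < 0 then -1 else 1
    have hs_abs : ∀ y, ‖s y‖ = ‖(1 : ℝ)‖ := fun y => by simp only [s]; split_ifs <;> simp
    have hs_meas : AEStronglyMeasurable s μ :=
      ((Measurable.ite measurableSet_Iio measurable_const measurable_const).comp_aemeasurable
        hg.aemeasurable).aestronglyMeasurable
    have hs_mem : MemLp s ⊤ μ :=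
      memLp_top_of_bound hs_meas 1 (ae_of_all _ fun y => by simp [hs_abs y])
    have hs_norm : eLpNorm s ⊤ μ = 1 := by
      rw [eLpNorm_congr_norm_ae (ae_of_all _ hs_abs), eLpNorm_const _ (by simp) (NeZero.ne μ)]
      simp
    refine ⟨s, hs_mem, by simp [hs_norm], ?_⟩
    have hsg : ∀ y, s y * g y = |g y| := fun y => by
      simp only [s]; split_ifs with h
      · rw [abs_of_neg h]; ring
      · rw [abs_of_nonneg (not_lt.mp h)]; ring
    simp only [hs_norm, ENNReal.toReal_one, div_one, hL s hs_mem, hsg]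
    exact (abs_of_nonneg (integral_nonneg fun y => abs_nonneg _)).symm
  · rintro r ⟨f, hf, hf0, rfl⟩
    rw [div_le_iff₀ (ENNReal.toReal_pos hf0 hf.eLpNorm_ne_top), hL f hf, mul_comm]
    exact abs_integral_mul_le_eLpNorm_top_mul hf hg

end Duality

section Profile

lemma integral_Ioi_abs_deriv_of_unimodal {G G' : ℝ → ℝ} {s₀ : ℝ} (hs₀ : 0 ≤ s₀)
    (hG : ∀ s, HasDerivAt G (G' s) s) (hG' : Continuous G')
    (hpos : ∀ s ∈ Ioc 0 s₀, 0 ≤ G' s) (hneg : ∀ s ∈ Ioi s₀, G' s ≤ 0)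
    (hlim : Tendsto G atTop (𝓝 0)) :
    ∫ s in Ioi 0, |G' s| = 2 * G s₀ - G 0 := by
  have hIoc : EqOn (fun s => |G' s|) G' (Ioc 0 s₀) := fun s hs => abs_of_nonneg (hpos s hs)
  have hIoi : EqOn (fun s => |G' s|) (fun s => -G' s) (Ioi s₀) :=
    fun s hs => abs_of_nonpos (hneg s hs)
  have hint : IntegrableOn G' (Ioi s₀) :=
    integrableOn_Ioi_deriv_of_nonpos' (fun s _ => hG s) hneg hlim
  rw [← Ioc_union_Ioi_eq_Ioi hs₀, setIntegral_union (Ioc_disjoint_Ioi le_rfl) measurableSet_Ioi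
      ((integrableOn_congr_fun hIoc measurableSet_Ioc).mpr hG'.integrableOn_Ioc)
      ((integrableOn_congr_fun hIoi measurableSet_Ioi).mpr hint.neg),
    setIntegral_congr_fun measurableSet_Ioc hIoc, setIntegral_congr_fun measurableSet_Ioi hIoi,
    ← intervalIntegral.integral_of_le hs₀,
    intervalIntegral.integral_eq_sub_of_hasDerivAt (fun s _ => hG s) (hG'.intervalIntegrable _ _),
    integral_neg, integral_Ioi_of_hasDerivAt_of_nonpos' (fun s _ => hG s) hneg hlim]
  ring

/-- `∂/∂x_n (x_n / |x|^k)` at height `x_n = a` and horizontal distance `s`. -/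
def normalDerivProfile (k : ℕ) (a s : ℝ) : ℝ :=
  1 / √(s ^ 2 + a ^ 2) ^ k - k * a ^ 2 / √(s ^ 2 + a ^ 2) ^ (k + 2)

variable {a : ℝ}

lemma pow_sub_one_mul_normalDerivProfile (m : ℕ) (s : ℝ) :
    s ^ (m - 1) * normalDerivProfile (m + 1) a s =
      -(s ^ (m - 1) * (m * a ^ 2 - s ^ 2) / √(s ^ 2 + a ^ 2) ^ (m + 3)) := by
  by_cases hR : √(s ^ 2 + a ^ 2) = 0
  · simp [normalDerivProfile, hR]
  have hR2 : √(s ^ 2 + a ^ 2) ^ 2 = s ^ 2 + a ^ 2 := Real.sq_sqrt (by positivity)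
  simp only [normalDerivProfile]
  field_simp
  set R := √(s ^ 2 + a ^ 2)
  rw [show a ^ 2 = R ^ 2 - s ^ 2 by linarith]
  push_cast
  ring

lemma hasDerivAt_pow_div_sqrt_pow (ha : 0 < a) {m : ℕ} (hm : 0 < m) (s : ℝ) :
    HasDerivAt (fun s => s ^ m / √(s ^ 2 + a ^ 2) ^ (m + 1))
      (s ^ (m - 1) * (m * a ^ 2 - s ^ 2) / √(s ^ 2 + a ^ 2) ^ (m + 3)) s := by
  obtain ⟨d, rfl⟩ := Nat.exists_eq_add_one_of_ne_zero hm.ne'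
  have hR : 0 < √(s ^ 2 + a ^ 2) := Real.sqrt_pos.mpr (by positivity)
  have hR2 : √(s ^ 2 + a ^ 2) ^ 2 = s ^ 2 + a ^ 2 := Real.sq_sqrt (by positivity)
  have hsqrt := (((hasDerivAt_pow 2 s).add_const (a ^ 2)).sqrt (by positivity)).pow (d + 2)
  refine ((hasDerivAt_pow (d + 1) s).div hsqrt (pow_ne_zero _ hR.ne')).congr_deriv ?_
  simp only [Pi.pow_apply, Nat.add_sub_cancel, show d + 2 - 1 = d + 1 from rfl, Nat.cast_add,
    Nat.cast_one, Nat.cast_ofNat]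
  field_simp
  set R := √(s ^ 2 + a ^ 2)
  rw [show a ^ 2 = R ^ 2 - s ^ 2 by linarith]
  ring

lemma tendsto_pow_div_sqrt_pow_atTop (m : ℕ) :
    Tendsto (fun s => s ^ m / √(s ^ 2 + a ^ 2) ^ (m + 1)) atTop (𝓝 0) := by
  refine tendsto_of_tendsto_of_tendsto_of_le_of_le' tendsto_const_nhds tendsto_inv_atTop_zero
    ?_ ?_
  · filter_upwards [eventually_ge_atTop 0] with s hs
    positivity
  · filter_upwards [eventually_gt_atTop 0] with s hs
    have hsR : s ≤ √(s ^ 2 + a ^ 2) := Real.le_sqrt_of_sq_le (by nlinarith [sq_nonneg a])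
    calc s ^ m / √(s ^ 2 + a ^ 2) ^ (m + 1) ≤ s ^ m / s ^ (m + 1) := by gcongr
      _ = s⁻¹ := by field_simp; ring

/-- `s ↦ s ^ (m-1) * normalDerivProfile (m+1) a s` is minus the derivative of
`s ↦ s ^ m / √(s² + a²) ^ (m+1)`, which increases up to `a √m` and then decreases to `0`. -/
lemma integral_Ioi_pow_mul_abs_normalDerivProfile (ha : 0 < a) {m : ℕ} (hm : 0 < m) :
    ∫ s in Ioi 0, s ^ (m - 1) * |normalDerivProfile (m + 1) a s| =
      2 * √m ^ m / (√(m + 1) ^ (m + 1) * a) := by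
  set s₀ := a * √m
  have hs₀ : s₀ ^ 2 = m * a ^ 2 := by
    rw [mul_pow, Real.sq_sqrt (by positivity)]; ring
  have hR₀ : √(s₀ ^ 2 + a ^ 2) = a * √(m + 1) := by
    rw [hs₀, show (m : ℝ) * a ^ 2 + a ^ 2 = a ^ 2 * (m + 1) by ring,
      Real.sqrt_mul (sq_nonneg a), Real.sqrt_sq ha.le]
  have hcont : Continuous fun s : ℝ =>
      s ^ (m - 1) * (m * a ^ 2 - s ^ 2) / √(s ^ 2 + a ^ 2) ^ (m + 3) := by
    fun_prop (disch := intro s; positivity)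
  have hG := integral_Ioi_abs_deriv_of_unimodal (by positivity : 0 ≤ s₀)
    (hasDerivAt_pow_div_sqrt_pow ha hm) hcont ?_ ?_ (tendsto_pow_div_sqrt_pow_atTop m)
  · rw [← setIntegral_congr_fun measurableSet_Ioi fun s (hs : 0 < s) => ?_] at hG
    · rw [hG, hR₀, zero_pow hm.ne', zero_div, sub_zero, mul_pow]
      field_simp
      ring
    · rw [← abs_of_nonneg (pow_nonneg hs.le (m - 1)), ← abs_mul,
        abs_of_nonneg (pow_nonneg hs.le (m - 1)), pow_sub_one_mul_normalDerivProfile, abs_neg]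
  · rintro s ⟨hs, hss₀⟩
    have : s ^ 2 ≤ s₀ ^ 2 := by gcongr
    have : 0 ≤ m * a ^ 2 - s ^ 2 := by linarith
    positivity
  · intro s (hs : s₀ < s)
    have : s₀ ^ 2 < s ^ 2 := by gcongr
    have hneg : m * a ^ 2 - s ^ 2 ≤ 0 := by linarith
    have hs : 0 < s := (by positivity : 0 ≤ s₀).trans_lt hs
    exact div_nonpos_of_nonpos_of_nonneg (mul_nonpos_of_nonneg_of_nonpos (by positivity) hneg)
      (by positivity)

end Profile

section Kernel

variable {E : Type*} [NormedAddCommGroup E] [InnerProductSpace ℝ E]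

lemma hasFDerivAt_norm_of_ne_zero {w : E} (hw : w ≠ 0) :
    HasFDerivAt (fun v : E => ‖v‖) (‖w‖⁻¹ • innerSL ℝ w) w := by
  have h := ((hasStrictFDerivAt_norm_sq w).hasFDerivAt).sqrt (by positivity)
  simp only [Real.sqrt_sq (norm_nonneg _)] at h
  convert h using 1
  ext v
  simp only [smul_apply, coe_innerSL_apply, smul_eq_mul, nsmul_eq_mul, Nat.cast_ofNat]
  field_simp

def innerDivNormPowFDeriv (e : E) (k : ℕ) (w : E) : StrongDual ℝ E :=
  (‖w‖ ^ k)⁻¹ • innerSL ℝ e - (k * ⟪e, w⟫ / ‖w‖ ^ (k + 2)) • innerSL ℝ w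

lemma hasFDerivAt_inner_div_norm_pow (e : E) (k : ℕ) {w : E} (hw : w ≠ 0) :
    HasFDerivAt (fun v : E => ⟪e, v⟫ / ‖v‖ ^ k) (innerDivNormPowFDeriv e k w) w := by
  have hN : ‖w‖ ≠ 0 := norm_ne_zero_iff.mpr hw
  have hinv := (hasDerivAt_inv (pow_ne_zero k hN)).comp_hasFDerivAt w
    ((hasFDerivAt_norm_of_ne_zero hw).pow k)
  have h := ((innerSL ℝ e).hasFDerivAt (x := w)).mul hinv
  refine h.congr_fderiv ?_
  ext v
  simp only [innerDivNormPowFDeriv, coe_innerSL_apply, nsmul_eq_mul, smul_eq_mul,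
    Function.comp_apply, add_apply, sub_apply, smul_apply, neg_smul, neg_apply]
  rcases k with _ | k
  · simp
  · simp only [add_tsub_cancel_right]
    field_simp
    ring

lemma norm_innerDivNormPowFDeriv_le {e : E} (he : ‖e‖ = 1) (k : ℕ) {w : E} (hw : w ≠ 0) :
    ‖innerDivNormPowFDeriv e k w‖ ≤ (k + 1) / ‖w‖ ^ k := by
  have hN : 0 < ‖w‖ := norm_pos_iff.mpr hw
  have hew : |⟪e, w⟫| ≤ ‖w‖ := by simpa [he] using abs_real_inner_le_norm e w
  calc ‖innerDivNormPowFDeriv e k w‖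
      ≤ ‖(‖w‖ ^ k)⁻¹ • innerSL ℝ e‖ + ‖(k * ⟪e, w⟫ / ‖w‖ ^ (k + 2)) • innerSL ℝ w‖ :=
        norm_sub_le _ _
    _ = 1 / ‖w‖ ^ k + k * |⟪e, w⟫| * ‖w‖ / ‖w‖ ^ (k + 2) := by
        simp only [norm_smul, innerSL_apply_norm, he, norm_inv, norm_div, norm_mul, norm_pow,
          Real.norm_eq_abs, abs_norm, Nat.abs_cast]
        ring
    _ ≤ 1 / ‖w‖ ^ k + k * ‖w‖ * ‖w‖ / ‖w‖ ^ (k + 2) := by gcongr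
    _ = (k + 1) / ‖w‖ ^ k := by
        field_simp
        ring

lemma innerDivNormPowFDeriv_apply_self {e : E} (he : ‖e‖ = 1) (k : ℕ) (w : E) :
    innerDivNormPowFDeriv e k w e = 1 / ‖w‖ ^ k - k * ⟪e, w⟫ ^ 2 / ‖w‖ ^ (k + 2) := by
  simp only [innerDivNormPowFDeriv, sub_apply, smul_apply, coe_innerSL_apply, smul_eq_mul,
    real_inner_self_eq_norm_sq, he, real_inner_comm w e]
  ring

lemma continuousAt_innerDivNormPowFDeriv (e : E) (k : ℕ) {w : E} (hw : w ≠ 0) :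
    ContinuousAt (innerDivNormPowFDeriv e k) w := by
  have : ‖w‖ ≠ 0 := norm_ne_zero_iff.mpr hw
  unfold innerDivNormPowFDeriv
  fun_prop (disch := positivity)

end Kernel

section Hyperplane

open Module

variable {E F : Type*} [NormedAddCommGroup E] [InnerProductSpace ℝ E]
  [NormedAddCommGroup F] [InnerProductSpace ℝ F] {ι : F →ₗᵢ[ℝ] E} {e : E}

lemma half_inner_lt_norm_sub (he : ‖e‖ = 1) (hιe : ∀ y, ⟪e, ι y⟫ = 0) {x z : E}
    (hz : z ∈ ball x (⟪e, x⟫ / 2)) (y : F) : ⟪e, x⟫ / 2 < ‖z - ι y‖ := by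
  have h1 : ⟪e, z - ι y⟫ ≤ ‖z - ι y‖ := by simpa [he] using real_inner_le_norm e (z - ι y)
  have h2 : ⟪e, x - z⟫ ≤ ‖x - z‖ := by simpa [he] using real_inner_le_norm e (x - z)
  rw [mem_ball', dist_eq_norm] at hz
  rw [inner_sub_right, hιe, sub_zero] at h1
  rw [inner_sub_right] at h2
  linarith

lemma exists_inv_norm_sub_pow_le (he : ‖e‖ = 1) (hιe : ∀ y, ⟪e, ι y⟫ = 0) {x : E}
    (hx : 0 < ⟪e, x⟫) (k : ℕ) :
    ∃ C, ∀ z ∈ ball x (⟪e, x⟫ / 2), ∀ y, (‖z - ι y‖ ^ k)⁻¹ ≤ C * ((1 + ‖y‖) ^ k)⁻¹ := by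
  set c := (2 + 2 * ‖x‖ + 2 * ⟪e, x⟫) / ⟪e, x⟫
  refine ⟨c ^ k, fun z hz y => ?_⟩
  have hN := half_inner_lt_norm_sub he hιe hz y
  have hNpos : 0 < ‖z - ι y‖ := by linarith
  have hfar : ‖y‖ - ‖z‖ ≤ ‖z - ι y‖ := by
    simpa [norm_sub_rev z, ι.norm_map] using norm_sub_norm_le (ι y) z
  have hz' : ‖z‖ ≤ ‖x‖ + ⟪e, x⟫ / 2 := by
    rw [mem_ball, dist_eq_norm] at hz
    linarith [norm_le_norm_add_norm_sub' z x]
  have hlin : 1 + ‖y‖ ≤ c * ‖z - ι y‖ := by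
    have hy : ‖y‖ ≤ ‖z - ι y‖ + ‖x‖ + ⟪e, x⟫ / 2 := by linarith
    rw [div_mul_eq_mul_div, le_div_iff₀ hx]
    nlinarith [mul_le_mul_of_nonneg_left hy hx.le,
      mul_lt_mul_of_pos_left hN (by positivity : 0 < 2 + 2 * ‖x‖ + ⟪e, x⟫)]
  calc (‖z - ι y‖ ^ k)⁻¹ = c ^ k * ((c * ‖z - ι y‖) ^ k)⁻¹ := by
        have : c ≠ 0 := by positivity
        rw [mul_pow]
        field_simp
    _ ≤ c ^ k * ((1 + ‖y‖) ^ k)⁻¹ := by gcongr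

lemma inner_add_smul (he : ‖e‖ = 1) (hιe : ∀ y, ⟪e, ι y⟫ = 0) (x' : F) (a : ℝ) :
    ⟪e, ι x' + a • e⟫ = a := by
  rw [inner_add_right, hιe, inner_smul_right, real_inner_self_eq_norm_sq, he, one_pow, mul_one,
    zero_add]

lemma norm_add_smul_sub (he : ‖e‖ = 1) (hιe : ∀ y, ⟪e, ι y⟫ = 0) (x' y : F) (a : ℝ) :
    ‖ι x' + a • e - ι y‖ = √(‖y - x'‖ ^ 2 + a ^ 2) := by
  have hperp : ⟪ι (x' - y), a • e⟫ = 0 := by rw [real_inner_comm, inner_smul_left, hιe, mul_zero]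
  rw [← Real.sqrt_sq (norm_nonneg _), show ι x' + a • e - ι y = ι (x' - y) + a • e by
      rw [map_sub]; abel, norm_add_sq_real, hperp, ι.norm_map,
    norm_sub_rev, norm_smul, he, mul_one, Real.norm_eq_abs, sq_abs, mul_zero, add_zero]

lemma innerDivNormPowFDeriv_apply_eq_normalDerivProfile (he : ‖e‖ = 1)
    (hιe : ∀ y, ⟪e, ι y⟫ = 0) (k : ℕ) (x' y : F) (a : ℝ) :
    innerDivNormPowFDeriv e k (ι x' + a • e - ι y) e = normalDerivProfile k a ‖y - x'‖ := by
  rw [innerDivNormPowFDeriv_apply_self he, norm_add_smul_sub he hιe, inner_sub_right,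
    inner_add_right, hιe, hιe, inner_smul_right, real_inner_self_eq_norm_sq, he]
  simp only [normalDerivProfile]
  ring

variable [FiniteDimensional ℝ F] [MeasurableSpace F] [BorelSpace F] {μ : Measure F}
  [μ.IsAddHaarMeasure]

lemma integrable_inv_one_add_norm_pow {k : ℕ} (hk : finrank ℝ F < k) :
    Integrable (fun y : F => ((1 + ‖y‖) ^ k)⁻¹) μ := by
  refine (integrable_one_add_norm (μ := μ) (r := k) (by exact_mod_cast hk)).congr
    (ae_of_all _ fun y => ?_)
  simp only [Real.rpow_neg (by positivity : (0 : ℝ) ≤ 1 + ‖y‖), Real.rpow_natCast]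

lemma integrable_innerDivNormPowFDeriv (he : ‖e‖ = 1) (hιe : ∀ y, ⟪e, ι y⟫ = 0) {x : E}
    (hx : 0 < ⟪e, x⟫) {k : ℕ} (hk : finrank ℝ F < k) :
    Integrable (fun y => innerDivNormPowFDeriv e k (x - ι y)) μ := by
  obtain ⟨C, hC⟩ := exists_inv_norm_sub_pow_le he hιe hx k
  have hN y := half_inner_lt_norm_sub he hιe (mem_ball_self (half_pos hx)) y
  have hcont : Continuous fun y => innerDivNormPowFDeriv e k (x - ι y) :=
    continuous_iff_continuousAt.mpr fun y =>
      (continuousAt_innerDivNormPowFDeriv e k (norm_pos_iff.mp (by linarith [hN y]))).comp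
        (by fun_prop)
  refine ((integrable_inv_one_add_norm_pow hk).const_mul ((k + 1) * C)).mono'
    hcont.aestronglyMeasurable (ae_of_all _ fun y => ?_)
  calc ‖innerDivNormPowFDeriv e k (x - ι y)‖ ≤ (k + 1) * (‖x - ι y‖ ^ k)⁻¹ := by
        rw [← div_eq_mul_inv]
        exact norm_innerDivNormPowFDeriv_le he k (norm_pos_iff.mp (by linarith [hN y]))
    _ ≤ (k + 1) * C * ((1 + ‖y‖) ^ k)⁻¹ := by
        rw [mul_assoc]
        gcongr
        exact hC x (mem_ball_self (half_pos hx)) y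

lemma hasFDerivAt_integral_inner_div_norm_pow (he : ‖e‖ = 1) (hιe : ∀ y, ⟪e, ι y⟫ = 0)
    {x : E} (hx : 0 < ⟪e, x⟫) {k : ℕ} (hk : finrank ℝ F < k) {f : F → ℝ} (hf : MemLp f ⊤ μ) :
    HasFDerivAt (fun z => ∫ y, ⟪e, z - ι y⟫ / ‖z - ι y‖ ^ k * f y ∂μ)
      (∫ y, f y • innerDivNormPowFDeriv e k (x - ι y) ∂μ) x := by
  obtain ⟨C, hC⟩ := exists_inv_norm_sub_pow_le he hιe hx k
  have hN {z} (hz : z ∈ ball x (⟪e, x⟫ / 2)) (y : F) : z - ι y ≠ 0 :=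
    norm_pos_iff.mp ((half_pos hx).trans (half_inner_lt_norm_sub he hιe hz y))
  have hg := integrable_inv_one_add_norm_pow (μ := μ) hk
  set M := (eLpNorm f ⊤ μ).toReal
  have hkernel : Integrable (fun y => ⟪e, x - ι y⟫ / ‖x - ι y‖ ^ k) μ := by
    refine (hg.const_mul (⟪e, x⟫ * C)).mono' (Measurable.aestronglyMeasurable (by fun_prop))
      (ae_of_all _ fun y => ?_)
    rw [inner_sub_right, hιe, sub_zero, norm_div, norm_pow, norm_norm,
      Real.norm_of_nonneg hx.le, div_eq_mul_inv, mul_assoc]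
    gcongr
    exact hC x (mem_ball_self (half_pos hx)) y
  refine hasFDerivAt_integral_of_dominated_of_fderiv_le (ball_mem_nhds x (half_pos hx))
    (F' := fun z y => f y • innerDivNormPowFDeriv e k (z - ι y))
    (bound := fun y => M * ((k + 1) * C * ((1 + ‖y‖) ^ k)⁻¹))
    (.of_forall fun z => (Measurable.aestronglyMeasurable (by fun_prop)).mul hf.1)
    (hkernel.mul_of_top_left hf)
    ((integrable_innerDivNormPowFDeriv he hιe hx hk).smul_of_top_right hf).aestronglyMeasurable
    ?_ ((hg.const_mul _).const_mul _) (ae_of_all _ fun y z hz => ?_)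
  · filter_upwards [ae_abs_le_eLpNorm_top_toReal hf] with y hy z hz
    rw [norm_smul, Real.norm_eq_abs, mul_assoc ((k : ℝ) + 1)]
    gcongr
    calc ‖innerDivNormPowFDeriv e k (z - ι y)‖ ≤ (k + 1) / ‖z - ι y‖ ^ k :=
          norm_innerDivNormPowFDeriv_le he k (hN hz y)
      _ ≤ (k + 1) * (C * ((1 + ‖y‖) ^ k)⁻¹) := by
          rw [div_eq_mul_inv]
          gcongr
          exact hC z hz y
  · have h := (hasFDerivAt_inner_div_norm_pow e k (hN hz y)).comp z
      ((hasFDerivAt_id z).sub_const (ι y))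
    exact h.mul_const (f y)

lemma integrable_normalDerivProfile (he : ‖e‖ = 1) (hιe : ∀ y, ⟪e, ι y⟫ = 0) {a : ℝ}
    (ha : 0 < a) {k : ℕ} (hk : finrank ℝ F < k) (x' : F) :
    Integrable (fun y => normalDerivProfile k a ‖y - x'‖) μ := by
  refine ((integrable_innerDivNormPowFDeriv he hιe (x := ι x' + a • e)
    (by rwa [inner_add_smul he hιe]) hk).apply_continuousLinearMap e).congr
    (ae_of_all _ fun y => ?_)
  exact innerDivNormPowFDeriv_apply_eq_normalDerivProfile he hιe k x' y a

lemma integral_smul_innerDivNormPowFDeriv_apply (he : ‖e‖ = 1) (hιe : ∀ y, ⟪e, ι y⟫ = 0)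
    {a : ℝ} (ha : 0 < a) {k : ℕ} (hk : finrank ℝ F < k) {f : F → ℝ} (hf : MemLp f ⊤ μ) (x' : F) :
    (∫ y, f y • innerDivNormPowFDeriv e k (ι x' + a • e - ι y) ∂μ) e =
      ∫ y, f y * normalDerivProfile k a ‖y - x'‖ ∂μ := by
  have hint : Integrable (fun y => f y • innerDivNormPowFDeriv e k (ι x' + a • e - ι y)) μ :=
    (integrable_innerDivNormPowFDeriv he hιe (x := ι x' + a • e) (by rwa [inner_add_smul he hιe])
      hk).smul_of_top_right hf
  rw [ContinuousLinearMap.integral_apply hint]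
  simp_rw [smul_apply, smul_eq_mul, innerDivNormPowFDeriv_apply_eq_normalDerivProfile he hιe]

lemma integral_abs_normalDerivProfile [Nontrivial F] {a : ℝ} (ha : 0 < a) (x' : F) :
    ∫ y, |normalDerivProfile (finrank ℝ F + 1) a ‖y - x'‖| ∂μ =
      finrank ℝ F * μ.real (ball 0 1) *
        (2 * √(finrank ℝ F) ^ finrank ℝ F / (√(finrank ℝ F + 1) ^ (finrank ℝ F + 1) * a)) := by
  rw [integral_sub_right_eq_self (fun y => |normalDerivProfile (finrank ℝ F + 1) a ‖y‖|) x',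
    integral_fun_norm_addHaar μ (fun s => |normalDerivProfile (finrank ℝ F + 1) a s|)]
  simp only [nsmul_eq_mul, smul_eq_mul,
    integral_Ioi_pow_mul_abs_normalDerivProfile ha finrank_pos]
  ring

end Hyperplane

section Coordinates

lemma lastUnit_eq_single (m : ℕ) :
    lastUnit (m + 1) m.succ_pos = EuclideanSpace.single (Fin.last m) 1 :=
  rfl

lemma inner_lastUnit (m : ℕ) (z : EuclideanSpace ℝ (Fin (m + 1))) :
    ⟪lastUnit (m + 1) m.succ_pos, z⟫ = z (Fin.last m) := by
  simp [lastUnit_eq_single, EuclideanSpace.inner_single_left]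

lemma norm_lastUnit (n : ℕ) (hn : 0 < n) : ‖lastUnit n hn‖ = 1 := by
  simp [lastUnit]

lemma embed_apply (m : ℕ) (y : EuclideanSpace ℝ (Fin m)) (i : Fin (m + 1)) :
    embed (m + 1) y i = if h : (i : ℕ) < m then y ⟨i, h⟩ else 0 :=
  rfl

lemma embed_apply_castSucc (m : ℕ) (y : EuclideanSpace ℝ (Fin m)) (i : Fin m) :
    embed (m + 1) y i.castSucc = y i := by
  simp [embed_apply]

lemma embed_apply_last (m : ℕ) (y : EuclideanSpace ℝ (Fin m)) :
    embed (m + 1) y (Fin.last m) = 0 := by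
  simp [embed_apply]

def embedLinearIsometry (m : ℕ) :
    EuclideanSpace ℝ (Fin m) →ₗᵢ[ℝ] EuclideanSpace ℝ (Fin (m + 1)) where
  toFun := embed (m + 1)
  map_add' y z := by
    ext i
    simp only [embed_apply, PiLp.add_apply]
    split_ifs <;> simp
  map_smul' c y := by
    ext i
    simp only [embed_apply, PiLp.smul_apply, RingHom.id_apply]
    split_ifs <;> simp
  norm_map' y := by
    change ‖embed (m + 1) y‖ = ‖y‖
    simp [EuclideanSpace.norm_eq, Fin.sum_univ_castSucc, embed_apply_castSucc, embed_apply_last]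

lemma embedLinearIsometry_apply (m : ℕ) (y : EuclideanSpace ℝ (Fin m)) :
    embedLinearIsometry m y = embed (m + 1) y :=
  rfl

lemma inner_lastUnit_embedLinearIsometry (m : ℕ) (y : EuclideanSpace ℝ (Fin m)) :
    ⟪lastUnit (m + 1) m.succ_pos, embedLinearIsometry m y⟫ = 0 := by
  rw [inner_lastUnit, embedLinearIsometry_apply, embed_apply_last]

lemma embedLinearIsometry_add_smul_lastUnit (m : ℕ) (x : EuclideanSpace ℝ (Fin (m + 1))) :
    embedLinearIsometry m (WithLp.toLp 2 fun i => x i.castSucc) +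
      x (Fin.last m) • lastUnit (m + 1) m.succ_pos = x := by
  ext i
  induction i using Fin.lastCases with
  | last => simp [embedLinearIsometry_apply, embed_apply_last, lastUnit_eq_single]
  | cast i => simp [embedLinearIsometry_apply, embed_apply_castSucc, lastUnit_eq_single]

lemma poisson_eq (m : ℕ) (f : EuclideanSpace ℝ (Fin m) → ℝ) :
    poisson (m + 1) m.succ_pos f = fun z => 2 / sphereArea (m + 1) *
      ∫ y, ⟪lastUnit (m + 1) m.succ_pos, z - embedLinearIsometry m y⟫ /
        ‖z - embedLinearIsometry m y‖ ^ (m + 1) * f y := by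
  ext z
  have hz (y : EuclideanSpace ℝ (Fin m)) :
      ⟪lastUnit (m + 1) m.succ_pos, z - embedLinearIsometry m y⟫ = z (Fin.last m) := by
    rw [inner_sub_right, inner_lastUnit_embedLinearIsometry, sub_zero, inner_lastUnit]
  simp_rw [hz, embedLinearIsometry_apply, norm_sub_rev z]
  rfl

lemma fderiv_poisson_apply_lastUnit {m : ℕ} {x : EuclideanSpace ℝ (Fin (m + 1))}
    (hx : 0 < x (Fin.last m)) {f : EuclideanSpace ℝ (Fin m) → ℝ} (hf : MemLp f ⊤ volume) :
    fderiv ℝ (poisson (m + 1) m.succ_pos f) x (lastUnit (m + 1) m.succ_pos) =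
      ∫ y, f y * (2 / sphereArea (m + 1) *
        normalDerivProfile (m + 1) (x (Fin.last m)) ‖y - WithLp.toLp 2 fun i => x i.castSucc‖) := by
  have he := norm_lastUnit (m + 1) m.succ_pos
  have hιe := inner_lastUnit_embedLinearIsometry m
  have hk : Module.finrank ℝ (EuclideanSpace ℝ (Fin m)) < m + 1 := by simp
  set x' : EuclideanSpace ℝ (Fin m) := WithLp.toLp 2 fun i => x i.castSucc
  set a := x (Fin.last m)
  have hx_eq : embedLinearIsometry m x' + a • lastUnit (m + 1) m.succ_pos = x :=
    embedLinearIsometry_add_smul_lastUnit m x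
  rw [poisson_eq, ← hx_eq,
    ((hasFDerivAt_integral_inner_div_norm_pow he hιe (by rwa [inner_add_smul he hιe]) hk
      hf).const_mul _).fderiv, smul_apply,
    integral_smul_innerDivNormPowFDeriv_apply he hιe hx hk hf, smul_eq_mul, ← integral_const_mul]
  simp_rw [mul_left_comm]

lemma sphereArea_pos {n : ℕ} (hn : 0 < n) : 0 < sphereArea n := by
  unfold sphereArea
  have := Real.Gamma_pos_of_pos (by positivity : (0 : ℝ) < n / 2)
  positivity

lemma natCast_mul_volume_real_ball {m : ℕ} (hm : 0 < m) :
    m * volume.real (ball (0 : EuclideanSpace ℝ (Fin m)) 1) = sphereArea m := by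
  have : Nonempty (Fin m) := ⟨⟨0, hm⟩⟩
  have hm2 : (0 : ℝ) < m / 2 := by positivity
  rw [measureReal_def, EuclideanSpace.volume_ball, Fintype.card_fin, ENNReal.ofReal_one, one_pow,
    one_mul, ENNReal.toReal_ofReal (by positivity), ← Real.rpow_natCast,
    ← Real.rpow_div_two_eq_sqrt _ pi_pos.le,
    Real.Gamma_add_one hm2.ne', sphereArea]
  field_simp

end Coordinates

/-- the sharp constant for the normal derivative coincides with that
for the gradient when `p = ∞`. -/
theorem sharp_normal_derivative_constant_Linfty (n : ℕ) (hn : 2 ≤ n)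
    (x : EuclideanSpace ℝ (Fin n)) (hx : 0 < x ⟨n - 1, by omega⟩) :
    sSup {r : ℝ | ∃ f : EuclideanSpace ℝ (Fin (n - 1)) → ℝ,
        MemLp f ⊤ volume ∧ eLpNorm f ⊤ volume ≠ 0 ∧
        r = |fderiv ℝ (poisson n (by omega) f) x (lastUnit n (by omega))| /
              (eLpNorm f ⊤ volume).toReal} =
    4 * ((n : ℝ) - 1) ^ (((n : ℝ) - 1) / 2) * sphereArea (n - 1) /
      ((n : ℝ) ^ ((n : ℝ) / 2) * sphereArea n * x ⟨n - 1, by omega⟩) := by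
  obtain ⟨m, rfl⟩ : ∃ m, n = m + 1 := ⟨n - 1, by omega⟩
  have hm : 0 < m := by omega
  have : Nontrivial (EuclideanSpace ℝ (Fin m)) :=
    Module.nontrivial_of_finrank_pos (R := ℝ) (by simpa)
  set x' : EuclideanSpace ℝ (Fin m) := WithLp.toLp 2 fun i => x i.castSucc
  set a := x (Fin.last m)
  have ha : 0 < a := hx
  have hint := integrable_normalDerivProfile (μ := volume) (norm_lastUnit (m + 1) m.succ_pos)
    (inner_lastUnit_embedLinearIsometry m) ha (k := m + 1) (by simp) x'
  refine ((isGreatest_abs_div_eLpNorm_top (hint.const_mul (2 / sphereArea (m + 1)))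
    fun f hf => fderiv_poisson_apply_lastUnit hx hf).csSup_eq).trans ?_
  have hI := integral_abs_normalDerivProfile (μ := volume) ha x'
  simp only [finrank_euclideanSpace_fin] at hI
  have hpow (k : ℕ) {y : ℝ} (hy : 0 ≤ y) : y ^ ((k : ℝ) / 2) = √y ^ k := by
    rw [Real.rpow_div_two_eq_sqrt _ hy, Real.rpow_natCast]
  have hω := sphereArea_pos (n := m + 1) (by omega)
  simp only [abs_mul, integral_const_mul, hI, Nat.add_sub_cancel]
  change _ = _ / (_ * _ * a)
  rw [abs_of_pos (div_pos two_pos hω), ← natCast_mul_volume_real_ball hm,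
    show ((m + 1 : ℕ) : ℝ) - 1 = m by push_cast; ring, hpow m m.cast_nonneg,
    hpow (m + 1) (m + 1).cast_nonneg]
  field_simp
  push_cast
  ring
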